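/- Let X ⊆ ℤ^n be c_1-connected, equipped with the Euclidean metric d. Let S,T: X → X with T c_1-continuous (i.e., whenever x and y are c_1-adjacent, T(x) = T(y) or T(x) and T(y) are c_1-adjacent), and suppose S and T commute (S∘T = T∘S). Suppose there exists β: [0,∞) → [0,1) such that d(S(x),S(y)) ≤ β(d(T(x),T(y)))·d(T(x),T(y)) for all x,y ∈ X. Then S is a constant function, and S and T have a common fixed point (there exists x_0 ∈ X with S(x_0) = x_0 and T(x_0) = x_0). -/

import Mathlib

open Filter Topology

/-- Points of ℤ^n are c₁-adjacent if they differ by exactly 1 in exactly one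
coordinate and agree in all other coordinates. -/
def C1Adj {n : ℕ} (x y : Fin n → ℤ) : Prop :=
  ∃ i, (x i - y i).natAbs = 1 ∧ ∀ j, j ≠ i → x j = y j

/-- A subset of ℤ^n is c₁-connected if any two of its points are joined by a
path in the set whose consecutive points are c₁-adjacent. -/
def C1Connected {n : ℕ} (X : Set (Fin n → ℤ)) : Prop :=
  ∀ x ∈ X, ∀ y ∈ X,
    Relation.ReflTransGen (fun a b => a ∈ X ∧ b ∈ X ∧ C1Adj a b) x y

/-- The Euclidean metric on ℤ^n. -/
noncomputable def euclDist {n : ℕ} (x y : Fin n → ℤ) : ℝ :=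
  Real.sqrt (∑ i, ((x i : ℝ) - (y i : ℝ)) ^ 2)

/-!
Adjacent points have T-images at distance at most 1, so their S-images are at distance
strictly less than 1 and hence coincide, being lattice points. Connectedness then makes S
constant, say with value c. Then S c = c, and S (T c) = c together with S (T c) = T (S c) = T c
gives T c = c.
-/

lemma abs_sub_le_euclDist {n : ℕ} (x y : Fin n → ℤ) (i : Fin n) :
    |(x i : ℝ) - y i| ≤ euclDist x y :=
  Real.abs_le_sqrt <| Finset.single_le_sum (f := fun j => ((x j : ℝ) - y j) ^ 2)
    (fun _ _ => sq_nonneg _) (Finset.mem_univ i)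

lemma eq_of_euclDist_lt_one {n : ℕ} {x y : Fin n → ℤ} (h : euclDist x y < 1) : x = y := by
  funext i
  have hlt : |((x i - y i : ℤ) : ℝ)| < 1 := by
    push_cast
    exact (abs_sub_le_euclDist x y i).trans_lt h
  rw [← Int.cast_abs, ← Int.cast_one, Int.cast_lt, Int.abs_lt_one_iff] at hlt
  exact sub_eq_zero.mp hlt

lemma C1Adj.euclDist_eq_one {n : ℕ} {x y : Fin n → ℤ} (h : C1Adj x y) : euclDist x y = 1 := by
  obtain ⟨i, hi, hother⟩ := h
  have hi_sq : ((x i : ℝ) - y i) ^ 2 = 1 := by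
    have : (x i - y i) ^ 2 = 1 := by rw [← Int.natAbs_sq, hi]; norm_num
    exact_mod_cast this
  rw [euclDist, Finset.sum_eq_single_of_mem i (Finset.mem_univ i), hi_sq, Real.sqrt_one]
  intro j _ hji
  simp [hother j hji]

lemma euclDist_le_one_of_eq_or_c1Adj {n : ℕ} {x y : Fin n → ℤ} (h : x = y ∨ C1Adj x y) :
    euclDist x y ≤ 1 := by
  rcases h with rfl | hadj
  · simp [euclDist]
  · exact hadj.euclDist_eq_one.le

lemma C1Connected.apply_eq_of_c1Adj {n : ℕ} {α : Type*} {X : Set (Fin n → ℤ)}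
    (hX : C1Connected X) {f : (Fin n → ℤ) → α}
    (hf : ∀ x ∈ X, ∀ y ∈ X, C1Adj x y → f x = f y) :
    ∀ x ∈ X, ∀ y ∈ X, f x = f y := by
  intro x hx y hy
  induction hX x hx y hy with
  | refl => rfl
  | tail _ hstep ih => exact (ih hstep.1).trans (hf _ hstep.1 _ hstep.2.1 hstep.2.2)

lemma exists_common_fixed_point_of_const {α : Type*} {X : Set α} (hne : X.Nonempty)
    {S T : α → α} (hS : ∀ x ∈ X, S x ∈ X) (hT : ∀ x ∈ X, T x ∈ X)
    (hcomm : ∀ x ∈ X, S (T x) = T (S x)) (hconst : ∀ x ∈ X, ∀ y ∈ X, S x = S y) :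
    ∃ x₀ ∈ X, S x₀ = x₀ ∧ T x₀ = x₀ := by
  obtain ⟨x, hx⟩ := hne
  have hc : S x ∈ X := hS x hx
  have hSc : S (S x) = S x := hconst _ hc x hx
  refine ⟨S x, hc, hSc, ?_⟩
  calc T (S x) = T (S (S x)) := by rw [hSc]
    _ = S (T (S x)) := (hcomm _ hc).symm
    _ = S x := hconst _ (hT _ hc) x hx

/-- If (T,S) is a pair of Geraghty contraction maps on a nonempty
c₁-connected subset of ℤ^n with the Euclidean metric, T is c₁-continuous, and S
and T commute, then S is constant and S and T have a common fixed point. -/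
theorem geraghty_pair_common_fixed_point
    {n : ℕ} (X : Set (Fin n → ℤ)) (hne : X.Nonempty) (hconn : C1Connected X)
    (S T : (Fin n → ℤ) → (Fin n → ℤ))
    (hS : ∀ x ∈ X, S x ∈ X) (hT : ∀ x ∈ X, T x ∈ X)
    (hTc : ∀ x ∈ X, ∀ y ∈ X, C1Adj x y → T x = T y ∨ C1Adj (T x) (T y))
    (hcomm : ∀ x ∈ X, S (T x) = T (S x))
    (β : ℝ → ℝ) (hβ : ∀ t, 0 ≤ t → 0 ≤ β t ∧ β t < 1)
    (hcontr : ∀ x ∈ X, ∀ y ∈ X,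
      euclDist (S x) (S y) ≤ β (euclDist (T x) (T y)) * euclDist (T x) (T y)) :
    (∀ x ∈ X, ∀ y ∈ X, S x = S y) ∧
      ∃ x₀ ∈ X, S x₀ = x₀ ∧ T x₀ = x₀ := by
  have hconst : ∀ x ∈ X, ∀ y ∈ X, S x = S y := by
    refine hconn.apply_eq_of_c1Adj fun x hx y hy hadj => eq_of_euclDist_lt_one ?_
    set t := euclDist (T x) (T y)
    have ht0 : 0 ≤ t := Real.sqrt_nonneg _
    have ht1 : t ≤ 1 := euclDist_le_one_of_eq_or_c1Adj (hTc x hx y hy hadj)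
    obtain ⟨hβ0, hβ1⟩ := hβ t ht0
    calc euclDist (S x) (S y) ≤ β t * t := hcontr x hx y hy
      _ ≤ β t := mul_le_of_le_one_right hβ0 ht1
      _ < 1 := hβ1
  exact ⟨hconst, exists_common_fixed_point_of_const hne hS hT hcomm hconst⟩
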